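/- Assume ξ and η are mutually singular. Let s ∈ ℝ satisfy ξ{s} = 0 and η{s} = 0. Then τ*(ζ(s)) < ∞ if and only if τ⁰(s) < ∞, and in that case ζ⁻¹(τ*(ζ(s))) = τ⁰(s). -/

import Mathlib

open MeasureTheory

/-- The purely atomic part `μ^d` of a measure on `ℝ`. -/
noncomputable def atomicPart (μ : Measure ℝ) : Measure ℝ :=
  μ.restrict {t : ℝ | μ {t} ≠ 0}

/-- The diffuse part `μ^c` of a measure on `ℝ`. -/
noncomputable def diffusePart (μ : Measure ℝ) : Measure ℝ :=
  μ.restrict {t : ℝ | μ {t} = 0}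

/-- The time change `ζ`. -/
noncomputable def zeta (ξ η : Measure ℝ) (s : ℝ) : ℝ :=
  if 0 ≤ s then
    s + (atomicPart ξ (Set.Ico 0 s)).toReal + (atomicPart η (Set.Ico 0 s)).toReal
  else
    s - (atomicPart ξ (Set.Ico s 0)).toReal - (atomicPart η (Set.Ico s 0)).toReal

/-- The generalized inverse `ζ⁻¹` of the time change `ζ`. -/
noncomputable def zetaInv (ξ η : Measure ℝ) (t : ℝ) : ℝ :=
  sInf {s : ℝ | t ≤ zeta ξ η s}

/-- The stretched measure `μ*` built from `μ` using the time change `ζ` of `(ξ, η)`. -/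
noncomputable def starM (ξ η μ : Measure ℝ) : Measure ℝ :=
  (diffusePart μ).map (zeta ξ η) +
    (atomicPart μ).bind fun t =>
      (μ {t})⁻¹ • volume.restrict (Set.Icc (zeta ξ η t) (zeta ξ η t + (μ {t}).toReal))

/-- `τ^u(s) := inf{t > s : u ξ{s} + ξ((s,t)) ≤ η[s,t]}`, with `inf ∅ = ∞`. -/
noncomputable def tauU (ξ η : Measure ℝ) (u s : ℝ) : EReal :=
  sInf (Real.toEReal ''
    {t : ℝ | s < t ∧ ENNReal.ofReal u * ξ {s} + ξ (Set.Ioo s t) ≤ η (Set.Icc s t)})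

/-- `τ*(r) := inf{t > r : ξ*[r,t] ≤ η*[r,t]}`, with `inf ∅ = ∞`. -/
noncomputable def tauStar (ξ η : Measure ℝ) (r : ℝ) : EReal :=
  sInf (Real.toEReal ''
    {t : ℝ | r < t ∧ starM ξ η ξ (Set.Icc r t) ≤ starM ξ η η (Set.Icc r t)})


/-!
The time change `ζ` is strictly increasing and left-continuous, with right limit
`ζ(t+) = ζ(t) + ξ{t} + η{t}`; its generalized inverse is monotone and 1-Lipschitz, and
`ζ⁻¹ v = t` exactly when `ζ t ≤ v ≤ ζ(t+)`. Since `μ*` spreads an atom `u` of `μ` uniformly over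
`[ζ u, ζ u + μ{u}] ⊆ [ζ u, ζ(u+)]`, one gets `μ*[ζ s, ζ t] = μ[s, t)` and
`μ*[ζ s, ζ(t+)] = μ[s, t]` for `μ = ξ, η`. As no point is an atom of both measures, each `t` in
the set defining `τ⁰(s)` is `ζ⁻¹ v` for `v = ζ t` or `v = ζ(t+)` in the set defining `τ*(ζ s)`,
and conversely `ζ⁻¹` maps the second set into the first. So `ζ⁻¹` maps the second set onto the
first, and infima correspond because `ζ⁻¹` is monotone and continuous.
-/

open Set Filter Topology
open scoped ENNReal

section Atoms

variable (μ : Measure ℝ)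

lemma countable_setOf_measure_singleton_ne_zero [SFinite μ] :
    {t : ℝ | μ {t} ≠ 0}.Countable := by
  simpa [pos_iff_ne_zero] using Measure.countable_meas_pos_of_disjoint_iUnion (μ := μ)
    (fun t => measurableSet_singleton t) (fun _ _ hab => disjoint_singleton.2 hab)

lemma diffusePart_add_atomicPart [SFinite μ] : diffusePart μ + atomicPart μ = μ := by
  have hcompl : {t : ℝ | μ {t} ≠ 0}ᶜ = {t | μ {t} = 0} := by
    ext
    simp
  rw [add_comm, diffusePart, atomicPart, ← hcompl]
  exact Measure.restrict_add_restrict_compl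
    (countable_setOf_measure_singleton_ne_zero μ).measurableSet

lemma diffusePart_singleton (t : ℝ) : diffusePart μ {t} = 0 := by
  rw [diffusePart, Measure.restrict_apply (measurableSet_singleton t)]
  by_cases h : μ {t} = 0
  · exact measure_mono_null inter_subset_left h
  · simp [h]

lemma atomicPart_singleton (t : ℝ) : atomicPart μ {t} = μ {t} := by
  rw [atomicPart, Measure.restrict_apply (measurableSet_singleton t)]
  by_cases h : μ {t} = 0
  · rw [h]
    exact measure_mono_null inter_subset_left h
  · simp [h]

instance [IsLocallyFiniteMeasure μ] : IsLocallyFiniteMeasure (atomicPart μ) :=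
  Measure.isLocallyFiniteMeasure_of_le Measure.restrict_le_self

end Atoms

lemma MeasureTheory.Measure.MutuallySingular.measure_singleton_eq_zero_or {α : Type*}
    [MeasurableSpace α] {μ ν : Measure α} (h : μ ⟂ₘ ν) (x : α) : μ {x} = 0 ∨ ν {x} = 0 := by
  by_cases hx : x ∈ h.nullSet
  · exact .inl (measure_mono_null (singleton_subset_iff.2 hx) h.measure_nullSet)
  · exact .inr (measure_mono_null (singleton_subset_iff.2 hx) h.measure_compl_nullSet)

section IntervalLimits

variable (ν : Measure ℝ) [IsLocallyFiniteMeasure ν] (t : ℝ)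

lemma tendsto_measure_Ico_nhdsLT : Tendsto (fun u => ν (Ico u t)) (𝓝[<] t) (𝓝 0) := by
  have hδ := tendsto_measure_biInter_gt (μ := ν) (s := fun δ => Ico (t - δ) t) (a := 0)
    (fun _ _ => nullMeasurableSet_Ico) (fun _ _ _ hij => Ico_subset_Ico_left (by linarith))
    ⟨1, one_pos, measure_Ico_lt_top.ne⟩
  have hempty : ⋂ δ > (0 : ℝ), Ico (t - δ) t = ∅ := by
    refine eq_empty_of_forall_notMem fun x hx => ?_
    simp only [mem_iInter, mem_Ico] at hx
    have hxt := (hx 1 one_pos).2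
    linarith [(hx ((t - x) / 2) (by linarith)).1]
  have hsub : Tendsto (fun u => t - u) (𝓝[<] t) (𝓝[>] 0) := by
    have h := ((continuous_sub_left t).continuousWithinAt (s := Iio t) (x := t)).tendsto_nhdsWithin
      (t := Ioi 0) fun u (hu : u < t) => sub_pos.2 hu
    rwa [sub_self] at h
  simpa [hempty, Function.comp_def] using hδ.comp hsub

lemma tendsto_measure_Ico_nhdsGT : Tendsto (fun u => ν (Ico t u)) (𝓝[>] t) (𝓝 (ν {t})) := by
  have h := tendsto_measure_biInter_gt (μ := ν) (s := fun u => Ico t u) (a := t)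
    (fun _ _ => nullMeasurableSet_Ico) (fun _ _ _ hij => Ico_subset_Ico_right hij)
    ⟨t + 1, by linarith, measure_Ico_lt_top.ne⟩
  have hpoint : ⋂ u > t, Ico t u = {t} := by
    ext x
    simp only [mem_iInter, mem_Ico, mem_singleton_iff]
    refine ⟨fun h => le_antisymm ?_ (h (t + 1) (by linarith)).1, ?_⟩
    · exact forall_gt_iff_le.1 fun c hc => (h c hc).2
    · rintro rfl
      exact fun _ hc => ⟨le_rfl, hc⟩
  rwa [hpoint] at h

end IntervalLimits

noncomputable def signedIcoMass (ν : Measure ℝ) (s : ℝ) : ℝ :=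
  if 0 ≤ s then (ν (Ico 0 s)).toReal else -(ν (Ico s 0)).toReal

lemma signedIcoMass_eq_add (ν : Measure ℝ) [IsLocallyFiniteMeasure ν] {u t : ℝ} (h : u ≤ t) :
    signedIcoMass ν t = signedIcoMass ν u + (ν (Ico u t)).toReal := by
  have split : ∀ {a b c : ℝ}, a ≤ b → b ≤ c →
      (ν (Ico a c)).toReal = (ν (Ico a b)).toReal + (ν (Ico b c)).toReal := fun hab hbc => by
    rw [← Ico_union_Ico_eq_Ico hab hbc, measure_union Ico_disjoint_Ico_same measurableSet_Ico,
      ENNReal.toReal_add measure_Ico_lt_top.ne measure_Ico_lt_top.ne]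
  unfold signedIcoMass
  rcases le_or_gt 0 u with hu | hu
  · rw [if_pos hu, if_pos (hu.trans h), split hu h]
  rcases le_or_gt 0 t with ht | ht
  · rw [if_pos ht, if_neg hu.not_ge, split hu.le ht]
    ring
  · rw [if_neg hu.not_ge, if_neg ht.not_ge, split h ht.le]
    ring

section Zeta

variable {ξ η : Measure ℝ}

noncomputable def zetaR (ξ η : Measure ℝ) (t : ℝ) : ℝ :=
  zeta ξ η t + (ξ {t}).toReal + (η {t}).toReal

lemma zeta_le_zetaR (t : ℝ) : zeta ξ η t ≤ zetaR ξ η t := by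
  unfold zetaR
  linarith [ENNReal.toReal_nonneg (a := ξ {t}), ENNReal.toReal_nonneg (a := η {t})]

lemma zeta_zero : zeta ξ η 0 = 0 := by
  simp [zeta]

variable [IsLocallyFiniteMeasure ξ] [IsLocallyFiniteMeasure η]

lemma zeta_eq_zeta_add {u t : ℝ} (h : u ≤ t) :
    zeta ξ η t = zeta ξ η u + (t - u)
      + (atomicPart ξ (Ico u t)).toReal + (atomicPart η (Ico u t)).toReal := by
  have hζ : ∀ s, zeta ξ η s = s + signedIcoMass (atomicPart ξ) s
      + signedIcoMass (atomicPart η) s := fun s => by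
    unfold zeta signedIcoMass
    split_ifs <;> ring
  rw [hζ, hζ, signedIcoMass_eq_add _ h, signedIcoMass_eq_add _ h]
  ring

lemma sub_le_zeta_sub_zeta {u t : ℝ} (h : u ≤ t) : t - u ≤ zeta ξ η t - zeta ξ η u := by
  rw [zeta_eq_zeta_add h]
  linarith [ENNReal.toReal_nonneg (a := atomicPart ξ (Ico u t)),
    ENNReal.toReal_nonneg (a := atomicPart η (Ico u t))]

lemma zeta_strictMono : StrictMono (zeta ξ η) := fun u t h => by
  linarith [sub_le_zeta_sub_zeta (ξ := ξ) (η := η) h.le]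

lemma zetaR_add_sub_le_zeta {u t : ℝ} (h : u < t) : zetaR ξ η u + (t - u) ≤ zeta ξ η t := by
  have hatom : ∀ μ : Measure ℝ, [IsLocallyFiniteMeasure μ] →
      (μ {u}).toReal ≤ (atomicPart μ (Ico u t)).toReal := fun μ _ => by
    rw [← atomicPart_singleton]
    exact ENNReal.toReal_mono measure_Ico_lt_top.ne
      (measure_mono (singleton_subset_iff.2 ⟨le_rfl, h⟩))
  rw [zeta_eq_zeta_add h.le, zetaR]
  linarith [hatom ξ, hatom η]

lemma zetaR_lt_zeta {u t : ℝ} (h : u < t) : zetaR ξ η u < zeta ξ η t := by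
  linarith [zetaR_add_sub_le_zeta (ξ := ξ) (η := η) h]

lemma zetaR_mono : Monotone (zetaR ξ η) := fun u t h => by
  rcases h.eq_or_lt with rfl | h
  · exact le_rfl
  · exact (zetaR_lt_zeta h).le.trans (zeta_le_zetaR t)

lemma tendsto_zeta_nhdsLT (t : ℝ) : Tendsto (zeta ξ η) (𝓝[<] t) (𝓝 (zeta ξ η t)) := by
  have hatom : ∀ μ : Measure ℝ, [IsLocallyFiniteMeasure μ] →
      Tendsto (fun u => (atomicPart μ (Ico u t)).toReal) (𝓝[<] t) (𝓝 0) := fun μ _ =>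
    (ENNReal.tendsto_toReal ENNReal.zero_ne_top).comp (tendsto_measure_Ico_nhdsLT _ t)
  have hlin : Tendsto (fun u => t - u) (𝓝[<] t) (𝓝 0) := by
    simpa using ((continuous_sub_left t).tendsto t).mono_left nhdsWithin_le_nhds
  have hlim := ((tendsto_const_nhds (x := zeta ξ η t)).sub hlin |>.sub (hatom ξ)).sub (hatom η)
  simp only [sub_zero] at hlim
  refine hlim.congr' ?_
  filter_upwards [self_mem_nhdsWithin] with u (hu : u < t)
  rw [zeta_eq_zeta_add hu.le]
  ring

lemma tendsto_zeta_nhdsGT (t : ℝ) : Tendsto (zeta ξ η) (𝓝[>] t) (𝓝 (zetaR ξ η t)) := by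
  have hatom : ∀ μ : Measure ℝ, [IsLocallyFiniteMeasure μ] →
      Tendsto (fun u => (atomicPart μ (Ico t u)).toReal) (𝓝[>] t) (𝓝 (μ {t}).toReal) :=
    fun μ _ => by
      rw [← atomicPart_singleton]
      exact (ENNReal.tendsto_toReal measure_singleton_lt_top.ne).comp
        (tendsto_measure_Ico_nhdsGT _ t)
  have hlin : Tendsto (fun u => u - t) (𝓝[>] t) (𝓝 0) := by
    simpa using ((continuous_sub_right t).tendsto t).mono_left nhdsWithin_le_nhds
  have hlim := ((tendsto_const_nhds (x := zeta ξ η t)).add hlin |>.add (hatom ξ)).add (hatom η)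
  rw [add_zero] at hlim
  refine hlim.congr' ?_
  filter_upwards [self_mem_nhdsWithin] with u (hu : t < u)
  rw [zeta_eq_zeta_add hu.le]

lemma nonempty_setOf_le_zeta (v : ℝ) : {u : ℝ | v ≤ zeta ξ η u}.Nonempty :=
  ⟨max v 0, show v ≤ zeta ξ η (max v 0) by
    linarith [le_max_left v 0, zeta_zero (ξ := ξ) (η := η),
      sub_le_zeta_sub_zeta (ξ := ξ) (η := η) (le_max_right v 0)]⟩

lemma bddBelow_setOf_le_zeta (v : ℝ) : BddBelow {u : ℝ | v ≤ zeta ξ η u} := by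
  refine ⟨min v 0, fun u (hu : v ≤ zeta ξ η u) => ?_⟩
  rcases le_total 0 u with h | h
  · exact (min_le_right v 0).trans h
  · linarith [min_le_left v 0, zeta_zero (ξ := ξ) (η := η),
      sub_le_zeta_sub_zeta (ξ := ξ) (η := η) h]

lemma zetaInv_le_of_le_zeta {v u : ℝ} (h : v ≤ zeta ξ η u) : zetaInv ξ η v ≤ u :=
  csInf_le (bddBelow_setOf_le_zeta v) h

lemma zetaInv_mono : Monotone (zetaInv ξ η) := fun _ w h =>
  csInf_le_csInf (bddBelow_setOf_le_zeta _) (nonempty_setOf_le_zeta w) fun _ hu => h.trans hu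

lemma zeta_zetaInv_le (v : ℝ) : zeta ξ η (zetaInv ξ η v) ≤ v := by
  by_contra! h
  obtain ⟨u, hvu, hu⟩ := ((tendsto_zeta_nhdsLT _).eventually (eventually_gt_nhds h)
    |>.and self_mem_nhdsWithin).exists
  exact (hu : u < zetaInv ξ η v).not_ge (zetaInv_le_of_le_zeta hvu.le)

lemma le_zetaR_zetaInv (v : ℝ) : v ≤ zetaR ξ η (zetaInv ξ η v) := by
  refine ge_of_tendsto (tendsto_zeta_nhdsGT _) ?_
  filter_upwards [self_mem_nhdsWithin] with u hu
  obtain ⟨w, hvw, hwu⟩ := exists_lt_of_csInf_lt (nonempty_setOf_le_zeta v) hu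
  exact hvw.trans (zeta_strictMono.monotone hwu.le)

lemma zetaInv_eq_iff {v t : ℝ} :
    zetaInv ξ η v = t ↔ zeta ξ η t ≤ v ∧ v ≤ zetaR ξ η t := by
  refine ⟨fun h => h ▸ ⟨zeta_zetaInv_le v, le_zetaR_zetaInv v⟩, fun ⟨h₁, h₂⟩ => ?_⟩
  refine le_antisymm (not_lt.1 fun h => ?_) (not_lt.1 fun h => ?_)
  · linarith [zetaR_lt_zeta (ξ := ξ) (η := η) h, zeta_zetaInv_le (ξ := ξ) (η := η) v]
  · linarith [zetaR_lt_zeta (ξ := ξ) (η := η) h, le_zetaR_zetaInv (ξ := ξ) (η := η) v]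

lemma zetaInv_zeta (t : ℝ) : zetaInv ξ η (zeta ξ η t) = t :=
  zetaInv_eq_iff.2 ⟨le_rfl, zeta_le_zetaR t⟩

lemma zetaInv_zetaR (t : ℝ) : zetaInv ξ η (zetaR ξ η t) = t :=
  zetaInv_eq_iff.2 ⟨zeta_le_zetaR t, le_rfl⟩

lemma lt_zetaInv_of_zetaR_lt {s v : ℝ} (h : zetaR ξ η s < v) : s < zetaInv ξ η v :=
  not_le.1 fun h' => h.not_ge ((le_zetaR_zetaInv v).trans (zetaR_mono h'))

lemma zetaInv_le_zetaInv_add {v w : ℝ} (h : v ≤ w) : zetaInv ξ η w ≤ zetaInv ξ η v + (w - v) := by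
  rcases h.eq_or_lt with rfl | h
  · simp
  refine zetaInv_le_of_le_zeta ?_
  linarith [zetaR_add_sub_le_zeta (ξ := ξ) (η := η)
    (lt_add_of_pos_right (zetaInv ξ η v) (sub_pos.2 h)), le_zetaR_zetaInv (ξ := ξ) (η := η) v]

lemma lipschitzWith_zetaInv : LipschitzWith 1 (zetaInv ξ η) :=
  LipschitzWith.of_le_add fun v w => by
    rcases le_total v w with h | h
    · exact (zetaInv_mono h).trans (le_add_of_nonneg_right dist_nonneg)
    · rw [Real.dist_eq, abs_of_nonneg (sub_nonneg.2 h)]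
      exact zetaInv_le_zetaInv_add h

lemma zeta_preimage_Icc {s t : ℝ} : zeta ξ η ⁻¹' Icc (zeta ξ η s) (zeta ξ η t) = Icc s t := by
  ext u
  simp only [mem_preimage, mem_Icc, zeta_strictMono.le_iff_le]

lemma zeta_preimage_Icc_zetaR {s t : ℝ} :
    zeta ξ η ⁻¹' Icc (zeta ξ η s) (zetaR ξ η t) = Icc s t := by
  ext u
  simp only [mem_preimage, mem_Icc, zeta_strictMono.le_iff_le]
  refine and_congr_right fun _ => ⟨fun h => not_lt.1 fun h' => (zetaR_lt_zeta h').not_ge h,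
    fun h => (zeta_strictMono.monotone h).trans (zeta_le_zetaR t)⟩

lemma zeta_add_toReal_le_zetaR {μ : Measure ℝ} {u : ℝ} (hμ : μ {u} ≤ ξ {u} + η {u}) :
    zeta ξ η u + (μ {u}).toReal ≤ zetaR ξ η u := by
  have hfin : ξ {u} + η {u} ≠ ⊤ :=
    ENNReal.add_ne_top.2 ⟨measure_singleton_lt_top.ne, measure_singleton_lt_top.ne⟩
  rw [zetaR, add_assoc, ← ENNReal.toReal_add measure_singleton_lt_top.ne
    measure_singleton_lt_top.ne]
  exact add_le_add le_rfl (ENNReal.toReal_mono hfin hμ)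

end Zeta

section Uniform

variable {m : ℝ≥0∞} {p q : ℝ} {C : Set ℝ}

lemma smul_restrict_Icc_apply_of_subset (hm₀ : m ≠ 0) (hm : m ≠ ⊤)
    (hC : Icc p (p + m.toReal) ⊆ C) : (m⁻¹ • volume.restrict (Icc p (p + m.toReal))) C = 1 := by
  rw [Measure.smul_apply, Measure.restrict_apply_superset hC, Real.volume_Icc,
    add_sub_cancel_left, ENNReal.ofReal_toReal hm, smul_eq_mul, ENNReal.inv_mul_cancel hm₀ hm]

lemma smul_restrict_Icc_apply_of_subsingleton (hC : (C ∩ Icc p q).Subsingleton) :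
    (m • volume.restrict (Icc p q)) C = 0 := by
  rw [Measure.smul_apply, Measure.restrict_apply' measurableSet_Icc, hC.measure_zero, smul_zero]

end Uniform

noncomputable def starKernel (ξ η μ : Measure ℝ) (u : ℝ) : Measure ℝ :=
  (μ {u})⁻¹ • volume.restrict (Icc (zeta ξ η u) (zeta ξ η u + (μ {u}).toReal))

lemma starM_eq_add_bind (ξ η μ : Measure ℝ) :
    starM ξ η μ = (diffusePart μ).map (zeta ξ η) + (atomicPart μ).bind (starKernel ξ η μ) :=
  rfl

section StarMeasure

variable {ξ η : Measure ℝ} (μ : Measure ℝ) [IsLocallyFiniteMeasure μ]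

lemma measurable_starKernel : Measurable (starKernel ξ η μ) := by
  refine measurable_const.measurable_of_countable_ne (f := fun _ => 0)
    ((countable_setOf_measure_singleton_ne_zero μ).mono fun u hu => ?_)
  intro h
  exact hu (by simp [starKernel, h])

variable [IsLocallyFiniteMeasure ξ] [IsLocallyFiniteMeasure η]

lemma starM_apply_of_forall_atom {C S : Set ℝ} (hC : MeasurableSet C) (hS : MeasurableSet S)
    (hK : ∀ u, μ {u} ≠ 0 → starKernel ξ η μ u C = S.indicator 1 u) :
    starM ξ η μ C = diffusePart μ (zeta ξ η ⁻¹' C) + atomicPart μ S := by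
  rw [starM_eq_add_bind, Measure.add_apply,
    Measure.map_apply zeta_strictMono.monotone.measurable hC, Measure.bind_apply hC (measurable_starKernel μ).aemeasurable, ← lintegral_indicator_one hS]
  congr 1
  exact lintegral_congr_ae <| (ae_restrict_mem
    (countable_setOf_measure_singleton_ne_zero μ).measurableSet).mono hK

variable {μ} (hμ : ∀ u, μ {u} ≤ ξ {u} + η {u}) {s t : ℝ}
include hμ

lemma starKernel_Icc_zeta {u : ℝ} (hu : μ {u} ≠ 0) :
    starKernel ξ η μ u (Icc (zeta ξ η s) (zeta ξ η t)) = (Ico s t).indicator 1 u := by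
  have hend := zeta_add_toReal_le_zetaR (hμ u)
  rcases lt_or_ge u s with hus | hsu
  · rw [indicator_of_notMem fun h => h.1.not_gt hus]
    refine smul_restrict_Icc_apply_of_subsingleton
      ((subsingleton_singleton (a := zeta ξ η s)).anti fun x hx => ?_)
    exact le_antisymm (by linarith [hx.2.2, zetaR_lt_zeta (ξ := ξ) (η := η) hus]) hx.1.1
  rcases lt_or_ge u t with hut | htu
  · rw [indicator_of_mem (show u ∈ Ico s t from ⟨hsu, hut⟩), Pi.one_apply]
    refine smul_restrict_Icc_apply_of_subset hu measure_singleton_lt_top.ne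
      (Icc_subset_Icc (zeta_strictMono.monotone hsu) ?_)
    linarith [zetaR_lt_zeta (ξ := ξ) (η := η) hut]
  · rw [indicator_of_notMem fun h => h.2.not_ge htu]
    refine smul_restrict_Icc_apply_of_subsingleton
      ((subsingleton_singleton (a := zeta ξ η t)).anti fun x hx => ?_)
    exact le_antisymm hx.1.2 (by linarith [hx.2.1, zeta_strictMono.monotone (f := zeta ξ η) htu])

lemma starKernel_Icc_zetaR {u : ℝ} (hu : μ {u} ≠ 0) :
    starKernel ξ η μ u (Icc (zeta ξ η s) (zetaR ξ η t)) = (Icc s t).indicator 1 u := by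
  have hend := zeta_add_toReal_le_zetaR (hμ u)
  rcases lt_or_ge u s with hus | hsu
  · rw [indicator_of_notMem fun h => h.1.not_gt hus]
    refine smul_restrict_Icc_apply_of_subsingleton
      ((subsingleton_singleton (a := zeta ξ η s)).anti fun x hx => ?_)
    exact le_antisymm (by linarith [hx.2.2, zetaR_lt_zeta (ξ := ξ) (η := η) hus]) hx.1.1
  rcases le_or_gt u t with hut | htu
  · rw [indicator_of_mem (show u ∈ Icc s t from ⟨hsu, hut⟩), Pi.one_apply]
    exact smul_restrict_Icc_apply_of_subset hu measure_singleton_lt_top.ne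
      (Icc_subset_Icc (zeta_strictMono.monotone hsu) (hend.trans (zetaR_mono hut)))
  · rw [indicator_of_notMem fun h => h.2.not_gt htu]
    refine smul_restrict_Icc_apply_of_subsingleton (subsingleton_empty.anti fun x hx => ?_)
    linarith [hx.1.2, hx.2.1, zetaR_lt_zeta (ξ := ξ) (η := η) htu]

lemma starM_Icc_zeta : starM ξ η μ (Icc (zeta ξ η s) (zeta ξ η t)) = μ (Ico s t) := by
  rw [starM_apply_of_forall_atom μ measurableSet_Icc measurableSet_Ico
      fun u hu => starKernel_Icc_zeta hμ hu, zeta_preimage_Icc,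
    ← measure_congr (Ico_ae_eq_Icc' (diffusePart_singleton μ t)), ← Measure.add_apply,
    diffusePart_add_atomicPart]

lemma starM_Icc_zetaR : starM ξ η μ (Icc (zeta ξ η s) (zetaR ξ η t)) = μ (Icc s t) := by
  rw [starM_apply_of_forall_atom μ measurableSet_Icc measurableSet_Icc
      fun u hu => starKernel_Icc_zetaR hμ hu, zeta_preimage_Icc_zetaR, ← Measure.add_apply,
    diffusePart_add_atomicPart]

end StarMeasure

lemma zetaInv_image_setOf_starM_le {ξ η : Measure ℝ} [IsLocallyFiniteMeasure ξ]
    [IsLocallyFiniteMeasure η] (hsing : ξ ⟂ₘ η) {s : ℝ} (hξs : ξ {s} = 0) (hηs : η {s} = 0) :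
    zetaInv ξ η '' {v | zeta ξ η s < v ∧
        starM ξ η ξ (Icc (zeta ξ η s) v) ≤ starM ξ η η (Icc (zeta ξ η s) v)} =
      {t | s < t ∧ ξ (Ioo s t) ≤ η (Icc s t)} := by
  have hξ : ∀ u, ξ {u} ≤ ξ {u} + η {u} := fun _ => le_self_add
  have hη : ∀ u, η {u} ≤ ξ {u} + η {u} := fun _ => le_add_self
  have hζs : zetaR ξ η s = zeta ξ η s := by simp [zetaR, hξs, hηs]
  ext t
  constructor
  · rintro ⟨v, ⟨hsv, hv⟩, rfl⟩
    have hst : s < zetaInv ξ η v := lt_zetaInv_of_zetaR_lt (hζs ▸ hsv)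
    refine ⟨hst, ?_⟩
    calc ξ (Ioo s (zetaInv ξ η v))
        = starM ξ η ξ (Icc (zeta ξ η s) (zeta ξ η (zetaInv ξ η v))) := by
          rw [starM_Icc_zeta hξ, measure_congr (Ioo_ae_eq_Ico' hξs)]
      _ ≤ starM ξ η ξ (Icc (zeta ξ η s) v) :=
          measure_mono (Icc_subset_Icc_right (zeta_zetaInv_le v))
      _ ≤ starM ξ η η (Icc (zeta ξ η s) v) := hv
      _ ≤ starM ξ η η (Icc (zeta ξ η s) (zetaR ξ η (zetaInv ξ η v))) :=
          measure_mono (Icc_subset_Icc_right (le_zetaR_zetaInv v))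
      _ = η (Icc s (zetaInv ξ η v)) := starM_Icc_zetaR hη
  · rintro ⟨hst, hle⟩
    rcases hsing.measure_singleton_eq_zero_or t with hξt | hηt
    · refine ⟨zetaR ξ η t, ⟨(zeta_strictMono hst).trans_le (zeta_le_zetaR t), ?_⟩,
        zetaInv_zetaR t⟩
      rwa [starM_Icc_zetaR hξ, starM_Icc_zetaR hη, ← measure_congr (Ioo_ae_eq_Icc' hξs hξt)]
    · refine ⟨zeta ξ η t, ⟨zeta_strictMono hst, ?_⟩, zetaInv_zeta t⟩
      rwa [starM_Icc_zeta hξ, starM_Icc_zeta hη, ← measure_congr (Ioo_ae_eq_Ico' hξs),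
        measure_congr (Ico_ae_eq_Icc' hηt)]

/-- Lemma 3.4: if `ξ{s} = η{s} = 0`, then `τ*(ζ(s)) < ∞` iff `τ⁰(s) < ∞`, and in that case
`ζ⁻¹(τ*(ζ(s))) = τ⁰(s)`. -/
theorem tauStar_zeta_of_not_atom (ξ η : Measure ℝ)
    [IsLocallyFiniteMeasure ξ] [IsLocallyFiniteMeasure η]
    (hsing : ξ ⟂ₘ η) (s : ℝ) (hξs : ξ {s} = 0) (hηs : η {s} = 0) :
    (tauStar ξ η (zeta ξ η s) ≠ ⊤ ↔ tauU ξ η 0 s ≠ ⊤) ∧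
      (∀ r : ℝ, tauStar ξ η (zeta ξ η s) = (r : EReal) →
        ((zetaInv ξ η r : ℝ) : EReal) = tauU ξ η 0 s) := by
  set B := {v | zeta ξ η s < v ∧
    starM ξ η ξ (Icc (zeta ξ η s) v) ≤ starM ξ η η (Icc (zeta ξ η s) v)}
  have hτ : tauStar ξ η (zeta ξ η s) = sInf ((fun v => ((id v : ℝ) : EReal)) '' B) := rfl
  have hτ₀ : tauU ξ η 0 s = sInf ((fun v => (zetaInv ξ η v : EReal)) '' B) := by
    rw [← image_image, zetaInv_image_setOf_starM_le hsing hξs hηs, tauU]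
    simp only [ENNReal.ofReal_zero, zero_mul, zero_add]
  rcases B.eq_empty_or_nonempty with hB | hB
  · simp [hτ, hτ₀, hB]
  have hinf : ∀ {f : ℝ → ℝ}, Monotone f → Continuous f →
      sInf ((fun v => (f v : EReal)) '' B) = f (sInf B) := fun hf hc =>
    (Monotone.map_csInf_of_continuousAt (continuous_coe_real_ereal.comp hc).continuousAt
      (fun _ _ h => EReal.coe_le_coe_iff.2 (hf h)) hB ⟨zeta ξ η s, fun _ hv => hv.1.le⟩).symm
  rw [hτ, hτ₀, hinf monotone_id continuous_id, hinf zetaInv_mono lipschitzWith_zetaInv.continuous]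
  exact ⟨by simp, fun r hr => by rw [← EReal.coe_eq_coe_iff.1 hr, id]⟩
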